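/- Let H be a complex Hilbert space, let C be a positive invertible bounded linear operator on H, and let (f_i)_{i∈ℕ} and (g_i)_{i∈ℕ} be C-controlled Bessel sequences in H, with B > 0 a C-controlled Bessel bound for (g_i). If f = ∑_i ⟪f, f_i⟫ C g_i for every f ∈ H, then (f_i) satisfies the lower controlled-frame inequality: for every f ∈ H, ∑_i ⟪f, f_i⟫ ⟪C f_i, f⟫ ≥ ‖f‖² / (B · ‖C^{-1/2}‖⁴ · ‖C‖²); in particular (f_i) is a C-controlled frame for H. -/

import Mathlib

/-!
The controlled sums of a `C`-controlled Bessel sequence `u` polarize to a positive semidefinite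
sesquilinear form `E z w = ∑ ⟪u i, w⟫ ⟪z, C (u i)⟫`, for which `C⁻¹` is symmetric and
`E (C⁻¹ y) y = ∑ ‖⟪u i, y⟫‖²`. Iterating the Cauchy–Schwarz inequality for `E` along the powers
`C⁻¹ ^ 2ⁿ` bounds this by `‖C⁻¹‖ E y y`, so `u` is an ordinary Bessel sequence, and no square root
of `C` is needed. Finally `‖x‖² = ∑ ⟪f i, x⟫ ⟪x, C (g i)⟫`, and the Cauchy–Schwarz inequality in
`ℓ²` gives `‖x‖⁴ ≤ ‖C⁻¹‖ r · ‖C⁻¹‖ B ‖C x‖²`, where `‖C⁻¹‖ ≤ ‖C^{-1/2}‖²`.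
-/

open scoped InnerProductSpace ComplexOrder

theorem le_of_forall_pow_two_pow_mul_le {a c K M : ℝ} (hc : 0 < c) (hM : 0 ≤ M)
    (h : ∀ n : ℕ, a ^ 2 ^ n * c ≤ K * M ^ 2 ^ n) : a ≤ M := by
  by_contra! hMa
  rcases hM.eq_or_lt with rfl | hM
  · have := h 0
    simp only [pow_zero, pow_one, zero_pow one_ne_zero, mul_zero] at this
    nlinarith
  · obtain ⟨n, hn⟩ := pow_unbounded_of_one_lt (K / c) ((one_lt_div hM).2 hMa)
    have hn' : K / c < (a / M) ^ 2 ^ n :=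
      hn.trans_le (pow_le_pow_right₀ ((one_lt_div hM).2 hMa).le Nat.lt_two_pow_self.le)
    rw [div_lt_iff₀ hc, div_pow, div_mul_eq_mul_div, lt_div_iff₀ (by positivity)] at hn'
    linarith [h n]

namespace LinearMap

variable {V : Type*} [AddCommGroup V] [Module ℂ V] {B : V →ₗ⋆[ℂ] V →ₗ[ℂ] ℂ}

theorem IsNonneg.isPosSemidef (hB : B.IsNonneg) : B.IsPosSemidef := by
  refine ⟨⟨fun x y => ?_⟩, hB⟩
  have hreal : ∀ z, (B z z).im = 0 := fun z => (Complex.nonneg_iff.1 (hB.nonneg z)).2.symm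
  have h₁ := hreal (x + y)
  have h₂ := hreal (x + Complex.I • y)
  simp only [map_add, map_smulₛₗ, LinearMap.add_apply, LinearMap.smul_apply, smul_eq_mul,
    Complex.conj_I, Complex.add_im, Complex.mul_im, Complex.I_re, Complex.I_im, Complex.neg_re,
    Complex.neg_im, RingHom.id_apply, Complex.add_re, Complex.mul_re, hreal x, hreal y] at h₁ h₂
  apply Complex.ext <;> simp <;> linarith

theorem IsPosSemidef.norm_sq_le (hB : B.IsPosSemidef) (x y : V) :
    ‖B x y‖ ^ 2 ≤ (B x x).re * (B y y).re := by
  let c : PreInnerProductSpace.Core ℂ V :=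
    { inner := fun x y => B x y
      conj_inner_symm := fun x y => hB.isSymm.eq y x
      re_inner_nonneg := fun x => (Complex.nonneg_iff.1 (hB.isNonneg.nonneg x)).1
      add_left := fun x y z => by simp
      smul_left := fun x y r => by simp }
  have hCS := InnerProductSpace.Core.inner_mul_inner_self_le (c := c) x y
  have hsymm : ‖B y x‖ = ‖B x y‖ := by rw [← hB.isSymm.eq x y, RCLike.norm_conj]
  change ‖B x y‖ * ‖B y x‖ ≤ _ at hCS
  rwa [hsymm, ← sq] at hCS

section Normed

variable {V : Type*} [NormedAddCommGroup V] [NormedSpace ℂ V] {B : V →ₗ⋆[ℂ] V →ₗ[ℂ] ℂ}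
  {K : ℝ} {A : V →L[ℂ] V}

theorem apply_pow_map (hA : ∀ x y, B (A x) y = B x (A y)) (m : ℕ) (x y : V) :
    B ((A ^ m) x) y = B x ((A ^ m) y) := by
  induction m generalizing x y with
  | zero => rfl
  | succ m ih =>
    rw [pow_succ', mul_apply_eq_comp, hA, ih, ← mul_apply_eq_comp, ← pow_succ, pow_succ',
      mul_apply_eq_comp]

-- The Cauchy–Schwarz step `q(Aᵐy)² ≤ q(A²ᵐy) q(y)` is iterated along `m = 2ⁿ`.
theorem IsPosSemidef.re_apply_map_self_le (hB : B.IsPosSemidef)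
    (hK : ∀ x, (B x x).re ≤ K * ‖x‖ ^ 2) (hA : ∀ x y, B (A x) y = B x (A y)) (y : V) :
    (B (A y) (A y)).re ≤ ‖A‖ ^ 2 * (B y y).re := by
  set q : V → ℝ := fun x => (B x x).re
  show q (A y) ≤ ‖A‖ ^ 2 * q y
  have hq : ∀ x, 0 ≤ q x := fun x => (Complex.nonneg_iff.1 (hB.isNonneg.nonneg x)).1
  have hstep : ∀ m, q ((A ^ m) y) ^ 2 ≤ q ((A ^ (2 * m)) y) * q y := fun m => by
    have h := hB.norm_sq_le ((A ^ (2 * m)) y) y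
    rw [two_mul, pow_add, mul_apply_eq_comp, apply_pow_map hA, ← mul_apply_eq_comp, ← pow_add,
      ← two_mul] at h
    exact (pow_le_pow_left₀ (hq _) (Complex.re_le_norm _) 2).trans h
  have hbound : ∀ n : ℕ, q ((A ^ 2 ^ n) y) ≤ max K 0 * ‖y‖ ^ 2 * (‖A‖ ^ 2) ^ 2 ^ n := fun n => by
    have hAy : ‖(A ^ 2 ^ n) y‖ ≤ ‖A‖ ^ 2 ^ n * ‖y‖ :=
      ((A ^ 2 ^ n).le_opNorm y).trans
        (mul_le_mul_of_nonneg_right (norm_pow_le' A (Nat.two_pow_pos n)) (norm_nonneg y))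
    calc q ((A ^ 2 ^ n) y) ≤ max K 0 * ‖(A ^ 2 ^ n) y‖ ^ 2 :=
          (hK _).trans (mul_le_mul_of_nonneg_right (le_max_left K 0) (sq_nonneg _))
      _ ≤ max K 0 * (‖A‖ ^ 2 ^ n * ‖y‖) ^ 2 := by gcongr
      _ = max K 0 * ‖y‖ ^ 2 * (‖A‖ ^ 2) ^ 2 ^ n := by ring
  rcases (hq y).eq_or_lt with hy | hy
  · have h := hstep 1
    rw [← hy, mul_zero, pow_one] at h
    rw [← hy, mul_zero]
    nlinarith [hq (A y)]
  · have hiter : ∀ n : ℕ, q (A y) ^ 2 ^ n * q y ≤ q ((A ^ 2 ^ n) y) * q y ^ 2 ^ n := by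
      intro n
      induction n with
      | zero => simp
      | succ n ih =>
        refine le_of_mul_le_mul_right ?_ hy
        calc q (A y) ^ 2 ^ (n + 1) * q y * q y = (q (A y) ^ 2 ^ n * q y) ^ 2 := by ring
          _ ≤ (q ((A ^ 2 ^ n) y) * q y ^ 2 ^ n) ^ 2 :=
              pow_le_pow_left₀ (mul_nonneg (pow_nonneg (hq _) _) hy.le) ih 2
          _ = q ((A ^ 2 ^ n) y) ^ 2 * q y ^ 2 ^ (n + 1) := by ring
          _ ≤ q ((A ^ (2 * 2 ^ n)) y) * q y * q y ^ 2 ^ (n + 1) :=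
              mul_le_mul_of_nonneg_right (hstep _) (pow_nonneg hy.le _)
          _ = q ((A ^ 2 ^ (n + 1)) y) * q y ^ 2 ^ (n + 1) * q y := by
              rw [pow_succ 2 n, mul_comm (2 ^ n) 2]; ring
    refine le_of_forall_pow_two_pow_mul_le (K := max K 0 * ‖y‖ ^ 2) hy (by positivity) fun n => ?_
    calc q (A y) ^ 2 ^ n * q y ≤ q ((A ^ 2 ^ n) y) * q y ^ 2 ^ n := hiter n
      _ ≤ max K 0 * ‖y‖ ^ 2 * (‖A‖ ^ 2) ^ 2 ^ n * q y ^ 2 ^ n :=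
          mul_le_mul_of_nonneg_right (hbound n) (pow_nonneg hy.le _)
      _ = max K 0 * ‖y‖ ^ 2 * (‖A‖ ^ 2 * q y) ^ 2 ^ n := by ring

theorem IsPosSemidef.norm_apply_map_le (hB : B.IsPosSemidef)
    (hK : ∀ x, (B x x).re ≤ K * ‖x‖ ^ 2) (hA : ∀ x y, B (A x) y = B x (A y)) (y : V) :
    ‖B (A y) y‖ ≤ ‖A‖ * (B y y).re := by
  have hq : 0 ≤ (B y y).re := (Complex.nonneg_iff.1 (hB.isNonneg.nonneg y)).1
  refine (pow_le_pow_iff_left₀ (norm_nonneg _) (by positivity) two_ne_zero).1 ?_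
  calc ‖B (A y) y‖ ^ 2 ≤ (B (A y) (A y)).re * (B y y).re := hB.norm_sq_le _ _
    _ ≤ ‖A‖ ^ 2 * (B y y).re * (B y y).re :=
        mul_le_mul_of_nonneg_right (hB.re_apply_map_self_le hK hA y) hq
    _ = (‖A‖ * (B y y).re) ^ 2 := by ring

end Normed

end LinearMap

section Series

variable {H : Type*} [NormedAddCommGroup H] [InnerProductSpace ℂ H]

theorem summable_inner_mul_inner {u v : ℕ → H}
    (h : ∀ x, Summable fun i => ⟪u i, x⟫_ℂ * ⟪x, v i⟫_ℂ) (z w : H) :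
    Summable fun i => ⟪u i, w⟫_ℂ * ⟪z, v i⟫_ℂ := by
  have hpolar : ∀ i, ⟪u i, w⟫_ℂ * ⟪z, v i⟫_ℂ = (1 / 4 : ℂ) *
      (⟪u i, z + w⟫_ℂ * ⟪z + w, v i⟫_ℂ
        + Complex.I * (⟪u i, Complex.I • z + w⟫_ℂ * ⟪Complex.I • z + w, v i⟫_ℂ)
        - ⟪u i, -z + w⟫_ℂ * ⟪-z + w, v i⟫_ℂ
        - Complex.I * (⟪u i, -Complex.I • z + w⟫_ℂ * ⟪-Complex.I • z + w, v i⟫_ℂ)) := by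
    intro i
    simp only [inner_add_left, inner_add_right, inner_smul_left, inner_smul_right, inner_neg_left,
      inner_neg_right, Complex.conj_I, map_neg]
    ring_nf
    rw [Complex.I_sq]
    ring
  simp_rw [hpolar]
  exact ((((h _).add ((h _).mul_left _)).sub (h _)).sub ((h _).mul_left _)).mul_left _

/-- `frameForm u v h z w = ⟪z, S w⟫` for the mixed frame operator `S w = ∑ ⟪u i, w⟫ v i`. -/
noncomputable def frameForm (u v : ℕ → H) (h : ∀ x, Summable fun i => ⟪u i, x⟫_ℂ * ⟪x, v i⟫_ℂ) :
    H →ₗ⋆[ℂ] H →ₗ[ℂ] ℂ :=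
  LinearMap.mk₂'ₛₗ (starRingEnd ℂ) (RingHom.id ℂ) (fun z w => ∑' i, ⟪u i, w⟫_ℂ * ⟪z, v i⟫_ℂ)
    (fun z z' w => by
      simp only [inner_add_left, mul_add]
      exact (summable_inner_mul_inner h z w).tsum_add (summable_inner_mul_inner h z' w))
    (fun c z w => by
      simp only [inner_smul_left, mul_left_comm _ (starRingEnd ℂ c)]
      exact tsum_mul_left)
    (fun z w w' => by
      simp only [inner_add_right, add_mul]
      exact (summable_inner_mul_inner h z w).tsum_add (summable_inner_mul_inner h z w'))
    (fun c z w => by simp only [inner_smul_right, mul_assoc]; exact tsum_mul_left)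

theorem hasSum_frameForm {u v : ℕ → H} (h : ∀ x, Summable fun i => ⟪u i, x⟫_ℂ * ⟪x, v i⟫_ℂ)
    (z w : H) : HasSum (fun i => ⟪u i, w⟫_ℂ * ⟪z, v i⟫_ℂ) (frameForm u v h z w) :=
  (summable_inner_mul_inner h z w).hasSum

end Series

section Controlled

variable {H : Type*} [NormedAddCommGroup H] [InnerProductSpace ℂ H]

def IsControlledBessel (C : H →L[ℂ] H) (u : ℕ → H) (K : ℝ) : Prop :=
  ∀ x : H, ∃ r : ℝ, 0 ≤ r ∧ r ≤ K * ‖x‖ ^ 2 ∧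
    HasSum (fun i => ⟪u i, x⟫_ℂ * ⟪x, C (u i)⟫_ℂ) (r : ℂ)

namespace IsControlledBessel

variable {C : H →L[ℂ] H} {u : ℕ → H} {K : ℝ}

theorem summable (hu : IsControlledBessel C u K) (x : H) :
    Summable fun i => ⟪u i, x⟫_ℂ * ⟪x, C (u i)⟫_ℂ :=
  let ⟨_, _, _, hr⟩ := hu x; hr.summable

noncomputable def form (hu : IsControlledBessel C u K) : H →ₗ⋆[ℂ] H →ₗ[ℂ] ℂ :=
  frameForm u (fun i => C (u i)) hu.summable

theorem hasSum_form (hu : IsControlledBessel C u K) (z w : H) :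
    HasSum (fun i => ⟪u i, w⟫_ℂ * ⟪z, C (u i)⟫_ℂ) (hu.form z w) :=
  hasSum_frameForm hu.summable z w

theorem nonneg_of_hasSum (hu : IsControlledBessel C u K) {x : H} {r : ℝ}
    (hr : HasSum (fun i => ⟪u i, x⟫_ℂ * ⟪x, C (u i)⟫_ℂ) (r : ℂ)) : 0 ≤ r :=
  let ⟨_, hr'0, _, hr'⟩ := hu x
  Complex.ofReal_injective (hr.unique hr') ▸ hr'0

theorem exists_form_self_eq (hu : IsControlledBessel C u K) (x : H) :
    ∃ r : ℝ, 0 ≤ r ∧ r ≤ K * ‖x‖ ^ 2 ∧ hu.form x x = r :=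
  let ⟨r, hr0, hrK, hr⟩ := hu x
  ⟨r, hr0, hrK, (hu.hasSum_form x x).unique hr⟩

theorem isPosSemidef_form (hu : IsControlledBessel C u K) : hu.form.IsPosSemidef :=
  LinearMap.IsNonneg.isPosSemidef ⟨fun x => by
    obtain ⟨r, hr0, -, hr⟩ := hu.exists_form_self_eq x
    rw [hr]
    exact_mod_cast hr0⟩

theorem re_form_self_le (hu : IsControlledBessel C u K) (x : H) :
    (hu.form x x).re ≤ K * ‖x‖ ^ 2 := by
  obtain ⟨r, -, hrK, hr⟩ := hu.exists_form_self_eq x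
  rwa [hr, Complex.ofReal_re]

variable {Cinv : H →L[ℂ] H}

theorem hasSum_inner_mul_inner (hu : IsControlledBessel C u K) (hC : C.IsSymmetric)
    (hCr : C ∘L Cinv = 1) (z w : H) :
    HasSum (fun i => ⟪z, u i⟫_ℂ * ⟪u i, w⟫_ℂ) (hu.form (Cinv z) w) := by
  convert hu.hasSum_form (Cinv z) w using 2 with i
  have hCsymm : ⟪C (Cinv z), u i⟫_ℂ = ⟪Cinv z, C (u i)⟫_ℂ := hC _ _
  rw [← hCsymm, ← ContinuousLinearMap.comp_apply, hCr, one_apply_eq_self, mul_comm]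

theorem form_rightInverse_symm (hu : IsControlledBessel C u K) (hC : C.IsSymmetric)
    (hCr : C ∘L Cinv = 1) (z w : H) :
    hu.form (Cinv z) w = hu.form z (Cinv w) := by
  rw [← hu.isPosSemidef_form.isSymm.eq (Cinv w) z]
  refine (hu.hasSum_inner_mul_inner hC hCr z w).unique ?_
  convert (hu.hasSum_inner_mul_inner hC hCr w z).map (starRingEnd ℂ)
    (continuous_star) using 2 with i
  simp [mul_comm]

theorem exists_hasSum_norm_inner_sq_le (hu : IsControlledBessel C u K) (hC : C.IsSymmetric)
    (hCr : C ∘L Cinv = 1) {y : H} {r : ℝ}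
    (hr : HasSum (fun i => ⟪u i, y⟫_ℂ * ⟪y, C (u i)⟫_ℂ) (r : ℂ)) :
    ∃ s : ℝ, HasSum (fun i => ‖⟪u i, y⟫_ℂ‖ ^ 2) s ∧ s ≤ ‖Cinv‖ * r := by
  have hyy : hu.form y y = r := (hu.hasSum_form y y).unique hr
  refine ⟨(hu.form (Cinv y) y).re, ?_, ?_⟩
  · convert Complex.hasSum_re (hu.hasSum_inner_mul_inner hC hCr y y) using 2 with i
    rw [← inner_conj_symm, RCLike.norm_conj, RCLike.mul_conj]
    norm_cast
  · calc (hu.form (Cinv y) y).re ≤ ‖hu.form (Cinv y) y‖ := Complex.re_le_norm _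
      _ ≤ ‖Cinv‖ * (hu.form y y).re := hu.isPosSemidef_form.norm_apply_map_le hu.re_form_self_le
          (hu.form_rightInverse_symm hC hCr) y
      _ = ‖Cinv‖ * r := by rw [hyy, Complex.ofReal_re]

theorem exists_hasSum_norm_inner_sq_le_mul_norm_sq (hu : IsControlledBessel C u K)
    (hC : C.IsSymmetric) (hCr : C ∘L Cinv = 1) (y : H) :
    ∃ s : ℝ, HasSum (fun i => ‖⟪u i, y⟫_ℂ‖ ^ 2) s ∧ s ≤ ‖Cinv‖ * (K * ‖y‖ ^ 2) := by
  obtain ⟨r, hr0, hrK, hr⟩ := hu y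
  obtain ⟨s, hs, hsr⟩ := hu.exists_hasSum_norm_inner_sq_le hC hCr hr
  exact ⟨s, hs, hsr.trans (mul_le_mul_of_nonneg_left hrK (norm_nonneg _))⟩

end IsControlledBessel

end Controlled

theorem norm_sq_le_of_hasSum_mul {ι R : Type*} [NormedRing R] {a b : ι → R} {A B : ℝ} {c : R}
    (ha : HasSum (fun i => ‖a i‖ ^ 2) A) (hb : HasSum (fun i => ‖b i‖ ^ 2) B)
    (hab : HasSum (fun i => a i * b i) c) : ‖c‖ ^ 2 ≤ A * B := by
  refine le_of_tendsto' ((continuous_norm.pow 2).continuousAt.tendsto.comp hab) fun s => ?_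
  calc ‖∑ i ∈ s, a i * b i‖ ^ 2 ≤ (∑ i ∈ s, ‖a i‖ * ‖b i‖) ^ 2 :=
        pow_le_pow_left₀ (norm_nonneg _)
          ((norm_sum_le _ _).trans (Finset.sum_le_sum fun i _ => norm_mul_le _ _)) 2
    _ ≤ (∑ i ∈ s, ‖a i‖ ^ 2) * ∑ i ∈ s, ‖b i‖ ^ 2 := Finset.sum_mul_sq_le_sq_mul_sq _ _ _
    _ ≤ A * B := mul_le_mul (sum_le_hasSum s (fun i _ => sq_nonneg _) ha)
        (sum_le_hasSum s (fun i _ => sq_nonneg _) hb) (Finset.sum_nonneg fun i _ => sq_nonneg _)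
        (ha.nonneg fun i => sq_nonneg _)

theorem sq_norm_sq_le_of_hasSum_smul {H : Type*} [NormedAddCommGroup H] [InnerProductSpace ℂ H]
    {f h : ℕ → H} {x : H} {A B : ℝ} (hx : HasSum (fun i => ⟪f i, x⟫_ℂ • h i) x)
    (hA : HasSum (fun i => ‖⟪f i, x⟫_ℂ‖ ^ 2) A) (hB : HasSum (fun i => ‖⟪h i, x⟫_ℂ‖ ^ 2) B) :
    (‖x‖ ^ 2) ^ 2 ≤ A * B := by
  have hxx : HasSum (fun i => ⟪f i, x⟫_ℂ * ⟪x, h i⟫_ℂ) ⟪x, x⟫_ℂ := by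
    simpa [inner_smul_right] using hx.mapL (innerSL ℂ x)
  simpa [inner_self_eq_norm_sq_to_K] using
    norm_sq_le_of_hasSum_mul hA (by simpa only [norm_inner_symm] using hB) hxx

theorem controlled_dual_lower_bound_general
    {H : Type*} [NormedAddCommGroup H] [InnerProductSpace ℂ H]
    (C : H →L[ℂ] H) (hC : C.IsPositive)
    (Cinv : H →L[ℂ] H) (hCr : C ∘L Cinv = 1)
    (R' : H →L[ℂ] H) (hR'sq : R' ∘L R' = Cinv)
    (f g : ℕ → H) (Bf B : ℝ) (hB : 0 < B)
    (hBesself : ∀ x : H, ∃ r : ℝ, 0 ≤ r ∧ r ≤ Bf * ‖x‖ ^ 2 ∧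
      HasSum (fun i => ⟪f i, x⟫_ℂ * ⟪x, C (f i)⟫_ℂ) (r : ℂ))
    (hBesselg : ∀ x : H, ∃ r : ℝ, 0 ≤ r ∧ r ≤ B * ‖x‖ ^ 2 ∧
      HasSum (fun i => ⟪g i, x⟫_ℂ * ⟪x, C (g i)⟫_ℂ) (r : ℂ))
    (hdual : ∀ x : H, HasSum (fun i => ⟪f i, x⟫_ℂ • C (g i)) x) :
    ∀ x : H, ∀ r : ℝ,
      HasSum (fun i => ⟪f i, x⟫_ℂ * ⟪x, C (f i)⟫_ℂ) (r : ℂ) →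
      ‖x‖ ^ 2 / (B * ‖R'‖ ^ 4 * ‖C‖ ^ 2) ≤ r := by
  intro x r hr
  have hr0 : 0 ≤ r := IsControlledBessel.nonneg_of_hasSum hBesself hr
  obtain ⟨Sf, hSf, hSf_le⟩ :=
    IsControlledBessel.exists_hasSum_norm_inner_sq_le hBesself hC.isSymmetric hCr hr
  obtain ⟨Sg, hSg, hSg_le⟩ := IsControlledBessel.exists_hasSum_norm_inner_sq_le_mul_norm_sq
    hBesselg hC.isSymmetric hCr (C x)
  have hx4 : (‖x‖ ^ 2) ^ 2 ≤ Sf * Sg := sq_norm_sq_le_of_hasSum_smul (hdual x) hSf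
    (by simpa only [hC.inner_left_eq_inner_right] using hSg)
  have hCinv : ‖Cinv‖ ≤ ‖R'‖ ^ 2 := hR'sq ▸ sq ‖R'‖ ▸ R'.opNorm_comp_le R'
  have hCx : ‖C x‖ ^ 2 ≤ ‖C‖ ^ 2 * ‖x‖ ^ 2 := by rw [← mul_pow]; gcongr; exact C.le_opNorm x
  have hx2 : ‖x‖ ^ 2 * ‖x‖ ^ 2 ≤ (r * (B * ‖R'‖ ^ 4 * ‖C‖ ^ 2)) * ‖x‖ ^ 2 :=
    calc ‖x‖ ^ 2 * ‖x‖ ^ 2 = (‖x‖ ^ 2) ^ 2 := (sq _).symm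
      _ ≤ Sf * Sg := hx4
      _ ≤ (‖Cinv‖ * r) * (‖Cinv‖ * (B * ‖C x‖ ^ 2)) :=
          mul_le_mul hSf_le hSg_le (hSg.nonneg fun _ => sq_nonneg _) (by positivity)
      _ ≤ (‖R'‖ ^ 2 * r) * (‖R'‖ ^ 2 * (B * (‖C‖ ^ 2 * ‖x‖ ^ 2))) := by gcongr
      _ = (r * (B * ‖R'‖ ^ 4 * ‖C‖ ^ 2)) * ‖x‖ ^ 2 := by ring
  have hD : 0 ≤ r * (B * ‖R'‖ ^ 4 * ‖C‖ ^ 2) := by positivity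
  exact div_le_of_le_mul₀ (by positivity) hr0 (by nlinarith [sq_nonneg ‖x‖])

/-- If `(f_i)` and `(g_i)` are `C`-controlled Bessel sequences (with `C`
positive and invertible), `B` is a controlled Bessel bound for `(g_i)`, and
`f = ∑_i ⟪f, f_i⟫ C g_i` for all `f`, then `(f_i)` satisfies the lower controlled-frame
inequality `∑_i ⟪f, f_i⟫⟪C f_i, f⟫ ≥ ‖f‖² / (B·‖C^{-1/2}‖⁴·‖C‖²)`; in particular it is a
`C`-controlled frame.  Here `R'` is the positive square root of `C⁻¹`; the paper's inner
product `⟪f, g⟫` (linear in the first argument) is Mathlib's `⟪g, f⟫_ℂ`. -/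
theorem controlled_dual_lower_bound
    {H : Type*} [NormedAddCommGroup H] [InnerProductSpace ℂ H] [CompleteSpace H]
    (C : H →L[ℂ] H) (hC : C.IsPositive)
    (Cinv : H →L[ℂ] H) (hCr : C ∘L Cinv = 1) (hCl : Cinv ∘L C = 1)
    (R' : H →L[ℂ] H) (hR' : R'.IsPositive) (hR'sq : R' ∘L R' = Cinv)
    (f g : ℕ → H) (Bf B : ℝ) (hBf : 0 < Bf) (hB : 0 < B)
    (hBesself : ∀ x : H, ∃ r : ℝ, 0 ≤ r ∧ r ≤ Bf * ‖x‖ ^ 2 ∧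
      HasSum (fun i => ⟪f i, x⟫_ℂ * ⟪x, C (f i)⟫_ℂ) (r : ℂ))
    (hBesselg : ∀ x : H, ∃ r : ℝ, 0 ≤ r ∧ r ≤ B * ‖x‖ ^ 2 ∧
      HasSum (fun i => ⟪g i, x⟫_ℂ * ⟪x, C (g i)⟫_ℂ) (r : ℂ))
    (hdual : ∀ x : H, HasSum (fun i => ⟪f i, x⟫_ℂ • C (g i)) x) :
    ∀ x : H, ∀ r : ℝ,
      HasSum (fun i => ⟪f i, x⟫_ℂ * ⟪x, C (f i)⟫_ℂ) (r : ℂ) →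
      ‖x‖ ^ 2 / (B * ‖R'‖ ^ 4 * ‖C‖ ^ 2) ≤ r :=
  controlled_dual_lower_bound_general C hC Cinv hCr R' hR'sq f g Bf B hB hBesself hBesselg hdual
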